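/- Exactness of the penalty scheme for large switching cost: suppose c > 2‖F(0)‖/γ. Let u be the solution of the QVI with switching cost c and, for each ρ ≥ 0, let u^ρ be the solution of the penalized equation with penalty parameter ρ and switching cost c. Then u^ρ = u for all ρ ≥ 0. -/

import Mathlib

open Filter Topology

noncomputable section

/-- A monotone system with constant `γ`: whenever `u i l - v i l` is the (nonnegative)
maximum of all differences, `F u i l - F v i l ≥ γ (u i l - v i l)`. -/
def IsMonotoneSystem {N d : ℕ} (γ : ℝ)
    (F : (Fin d → Fin N → ℝ) → Fin d → Fin N → ℝ) : Prop :=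
  ∀ u v : Fin d → Fin N → ℝ, ∀ i : Fin d, ∀ l : Fin N,
    (∀ (j : Fin d) (k : Fin N), u j k - v j k ≤ u i l - v i l) →
    0 ≤ u i l - v i l →
    γ * (u i l - v i l) ≤ F u i l - F v i l

/-- The intervention operator `(M_i u)_l = max_{j ≠ i} (u j l - c)`. -/
def Mop {N d : ℕ} (c : ℝ) (u : Fin d → Fin N → ℝ) (i : Fin d) (l : Fin N) : ℝ :=
  ⨆ j : {j : Fin d // j ≠ i}, (u j l - c)

/-- The sup-norm `‖u‖ = max_{i,l} |u i l|`. -/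
def supNorm {N d : ℕ} (u : Fin d → Fin N → ℝ) : ℝ :=
  ⨆ p : Fin d × Fin N, |u p.1 p.2|

/-- A penalty function: continuous, non-decreasing, vanishing on `(-∞,0]` and
positive on `(0,∞)`. -/
def IsPenaltyFunction (π : ℝ → ℝ) : Prop :=
  Continuous π ∧ Monotone π ∧ (∀ y : ℝ, y ≤ 0 → π y = 0) ∧ (∀ y : ℝ, 0 < y → 0 < π y)

/-- A concave system: each `F_i` is concave (componentwise). -/
def IsConcaveSystem {N d : ℕ}
    (F : (Fin d → Fin N → ℝ) → Fin d → Fin N → ℝ) : Prop :=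
  ∀ (i : Fin d) (u v : Fin d → Fin N → ℝ) (θ : ℝ), 0 ≤ θ → θ ≤ 1 → ∀ l : Fin N,
    θ * F u i l + (1 - θ) * F v i l ≤ F (fun j k => θ * u j k + (1 - θ) * v j k) i l

/-!
Both the QVI solution and every penalized solution `w` satisfy `F w ≥ 0`, and `F w = 0` at
every entry `(i, l)` where switching is strictly unprofitable (`w j l - c < w i l` for all
`j ≠ i`). At an entry where `w` is maximal this is the case, so the comparison with `0` for the
monotone system gives the a priori bound `‖w‖ ≤ ‖F(0)‖/γ`. Since `c > 2‖F(0)‖/γ`, switching is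
then unprofitable everywhere, so all of these solve `F w = 0`, whose solution is unique.
-/

variable {N d : ℕ}

lemma supNorm_nonneg (u : Fin d → Fin N → ℝ) : 0 ≤ supNorm u :=
  Real.iSup_nonneg fun _ => abs_nonneg _

lemma abs_apply_le_supNorm (u : Fin d → Fin N → ℝ) (i : Fin d) (l : Fin N) :
    |u i l| ≤ supNorm u :=
  le_ciSup (f := fun p : Fin d × Fin N => |u p.1 p.2|) (Set.finite_range _).bddAbove (i, l)

lemma exists_max_entry (w : Fin d → Fin N → ℝ) (i : Fin d) (l : Fin N) :
    ∃ i₀ l₀, ∀ j k, w j k ≤ w i₀ l₀ := by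
  have : Nonempty (Fin d × Fin N) := ⟨(i, l)⟩
  obtain ⟨p, hp⟩ := Finite.exists_max fun p : Fin d × Fin N => w p.1 p.2
  exact ⟨p.1, p.2, fun j k => hp (j, k)⟩

namespace IsMonotoneSystem

variable {γ : ℝ} {F : (Fin d → Fin N → ℝ) → Fin d → Fin N → ℝ}

lemma sub_le_div (hF : IsMonotoneSystem γ F) (hγ : 0 < γ) {u v : Fin d → Fin N → ℝ}
    {i : Fin d} {l : Fin N} (hmax : ∀ j k, u j k - v j k ≤ u i l - v i l) {b : ℝ}
    (hb₀ : 0 ≤ b) (hb : F u i l - F v i l ≤ b) (j : Fin d) (k : Fin N) :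
    u j k - v j k ≤ b / γ := by
  refine (hmax j k).trans ?_
  rw [le_div_iff₀' hγ]
  rcases le_total 0 (u i l - v i l) with h | h
  · exact (hF u v i l hmax h).trans hb
  · exact (mul_nonpos_of_nonneg_of_nonpos hγ.le h).trans hb₀

theorem le_of_forall_le (hF : IsMonotoneSystem γ F) (hγ : 0 < γ) {u v : Fin d → Fin N → ℝ}
    (h : ∀ i l, F u i l ≤ F v i l) : u ≤ v := by
  intro i l
  obtain ⟨i₀, l₀, hmax⟩ := exists_max_entry (fun j k => u j k - v j k) i l
  have := hF.sub_le_div hγ hmax le_rfl (sub_nonpos.mpr (h i₀ l₀)) i l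
  rw [zero_div] at this
  linarith

theorem injective (hF : IsMonotoneSystem γ F) (hγ : 0 < γ) : Function.Injective F :=
  fun _ _ h => le_antisymm (hF.le_of_forall_le hγ fun i l => (congr_fun₂ h i l).le)
    (hF.le_of_forall_le hγ fun i l => (congr_fun₂ h i l).ge)

theorem abs_le_supNorm_div (hF : IsMonotoneSystem γ F) (hγ : 0 < γ) {w : Fin d → Fin N → ℝ}
    (hpos : ∀ i l, 0 ≤ F w i l) (hmax : ∀ i l, (∀ j k, w j k ≤ w i l) → F w i l ≤ 0)
    (i : Fin d) (l : Fin N) : |w i l| ≤ supNorm (F 0) / γ := by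
  rw [abs_le]
  constructor
  · obtain ⟨i₀, l₀, h₀⟩ := exists_max_entry (fun j k => (0 : Fin d → Fin N → ℝ) j k - w j k) i l
    have := hF.sub_le_div hγ h₀ (supNorm_nonneg _)
      (by linarith [hpos i₀ l₀, le_abs_self (F 0 i₀ l₀), abs_apply_le_supNorm (F 0) i₀ l₀]) i l
    rw [Pi.zero_apply, Pi.zero_apply] at this
    linarith
  · obtain ⟨i₀, l₀, h₀⟩ := exists_max_entry w i l
    have := hF.sub_le_div hγ (v := 0) (by simpa using h₀) (supNorm_nonneg _)
      (by linarith [hmax i₀ l₀ h₀, neg_abs_le (F 0 i₀ l₀), abs_apply_le_supNorm (F 0) i₀ l₀]) i l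
    rwa [Pi.zero_apply, Pi.zero_apply, sub_zero] at this

theorem eq_zero_of_switching_unprofitable (hF : IsMonotoneSystem γ F) (hγ : 0 < γ) {c : ℝ}
    (hc : 2 * supNorm (F 0) / γ < c) {w : Fin d → Fin N → ℝ} (hpos : ∀ i l, 0 ≤ F w i l)
    (hunprof : ∀ i l, (∀ j ≠ i, w j l - c < w i l) → F w i l = 0) : F w = 0 := by
  have hc₀ : 0 < c := (div_nonneg (by linarith [supNorm_nonneg (F 0)]) hγ.le).trans_lt hc
  have hbound := hF.abs_le_supNorm_div hγ hpos fun i l hmax =>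
    (hunprof i l fun j _ => by linarith [hmax j l]).le
  have hsplit : 2 * supNorm (F 0) / γ = supNorm (F 0) / γ + supNorm (F 0) / γ := by ring
  funext i l
  exact hunprof i l fun j _ => by
    linarith [(abs_le.mp (hbound j l)).2, (abs_le.mp (hbound i l)).1]

end IsMonotoneSystem

lemma Mop_lt (hd : 2 ≤ d) {c : ℝ} {u : Fin d → Fin N → ℝ} {i : Fin d} {l : Fin N}
    (h : ∀ j ≠ i, u j l - c < u i l) : Mop c u i l < u i l := by
  have : Nontrivial (Fin d) := Fin.nontrivial_iff_two_le.mpr hd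
  have : Nonempty {j : Fin d // j ≠ i} := (exists_ne i).elim fun j hj => ⟨⟨j, hj⟩⟩
  obtain ⟨j, hj⟩ := exists_eq_ciSup_of_finite (f := fun j : {j : Fin d // j ≠ i} => u j l - c)
  rw [Mop, ← hj]
  exact h j j.2

lemma IsPenaltyFunction.nonneg {π : ℝ → ℝ} (hπ : IsPenaltyFunction π) (y : ℝ) : 0 ≤ π y := by
  rcases le_or_gt y 0 with h | h
  · exact (hπ.2.2.1 y h).ge
  · exact (hπ.2.2.2 y h).le

section Solutions

variable {F : (Fin d → Fin N → ℝ) → Fin d → Fin N → ℝ} {c : ℝ} {w : Fin d → Fin N → ℝ}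

lemma qvi_nonneg {i : Fin d} {l : Fin N} (hw : min (F w i l) (w i l - Mop c w i l) = 0) :
    0 ≤ F w i l :=
  hw ▸ min_le_left _ _

lemma qvi_eq_zero_of_switching_unprofitable (hd : 2 ≤ d) {i : Fin d} {l : Fin N}
    (hw : min (F w i l) (w i l - Mop c w i l) = 0) (h : ∀ j ≠ i, w j l - c < w i l) :
    F w i l = 0 := by
  rcases min_eq_iff.mp hw with ⟨hF, -⟩ | ⟨hM, -⟩
  · exact hF
  · linarith [Mop_lt hd h]

variable {π : ℝ → ℝ} {ρ : ℝ}

lemma penalized_nonneg (hπ : IsPenaltyFunction π) (hρ : 0 ≤ ρ) {i : Fin d} {l : Fin N}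
    (hw : F w i l - ρ * ∑ j ∈ Finset.univ.erase i, π (w j l - c - w i l) = 0) :
    0 ≤ F w i l := by
  rw [sub_eq_zero.mp hw]
  exact mul_nonneg hρ (Finset.sum_nonneg fun j _ => hπ.nonneg _)

lemma penalized_eq_zero_of_switching_unprofitable (hπ : IsPenaltyFunction π) {i : Fin d}
    {l : Fin N} (hw : F w i l - ρ * ∑ j ∈ Finset.univ.erase i, π (w j l - c - w i l) = 0)
    (h : ∀ j ≠ i, w j l - c < w i l) : F w i l = 0 := by
  rw [sub_eq_zero.mp hw, Finset.sum_eq_zero, mul_zero]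
  intro j hj
  exact hπ.2.2.1 _ (by linarith [h j (Finset.ne_of_mem_erase hj)])

end Solutions

theorem penalty_exact_for_large_cost_general {N d : ℕ} (hd : 2 ≤ d)
    (γ : ℝ) (hγ : 0 < γ)
    (F : (Fin d → Fin N → ℝ) → Fin d → Fin N → ℝ)
    (hFmono : IsMonotoneSystem γ F)
    (π : ℝ → ℝ) (hπ : IsPenaltyFunction π)
    (c : ℝ) (hc : 2 * supNorm (F 0) / γ < c)
    (u : Fin d → Fin N → ℝ)
    (hu : ∀ i l, min (F u i l) (u i l - Mop c u i l) = 0)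
    (U : ℝ → Fin d → Fin N → ℝ)
    (hU : ∀ ρ : ℝ, 0 ≤ ρ → ∀ i l,
      F (U ρ) i l - ρ * ∑ j ∈ Finset.univ.erase i, π (U ρ j l - c - U ρ i l) = 0) :
    ∀ ρ : ℝ, 0 ≤ ρ → U ρ = u := by
  have hFu : F u = 0 := hFmono.eq_zero_of_switching_unprofitable hγ hc
    (fun i l => qvi_nonneg (hu i l))
    (fun i l => qvi_eq_zero_of_switching_unprofitable hd (hu i l))
  intro ρ hρ
  have hFU : F (U ρ) = 0 := hFmono.eq_zero_of_switching_unprofitable hγ hc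
    (fun i l => penalized_nonneg hπ hρ (hU ρ hρ i l))
    (fun i l => penalized_eq_zero_of_switching_unprofitable hπ (hU ρ hρ i l))
  exact hFmono.injective hγ (hFU.trans hFu.symm)

/-- Exactness of the penalty scheme for large switching cost `c > 2‖F(0)‖/γ`. -/
theorem penalty_exact_for_large_cost {N d : ℕ} (hN : 1 ≤ N) (hd : 2 ≤ d)
    (γ : ℝ) (hγ : 0 < γ)
    (F : (Fin d → Fin N → ℝ) → Fin d → Fin N → ℝ)
    (hFcont : Continuous F) (hFmono : IsMonotoneSystem γ F)
    (π : ℝ → ℝ) (hπ : IsPenaltyFunction π)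
    (c : ℝ) (hc : 2 * supNorm (F 0) / γ < c)
    (u : Fin d → Fin N → ℝ)
    (hu : ∀ i l, min (F u i l) (u i l - Mop c u i l) = 0)
    (U : ℝ → Fin d → Fin N → ℝ)
    (hU : ∀ ρ : ℝ, 0 ≤ ρ → ∀ i l,
      F (U ρ) i l - ρ * ∑ j ∈ Finset.univ.erase i, π (U ρ j l - c - U ρ i l) = 0) :
    ∀ ρ : ℝ, 0 ≤ ρ → U ρ = u :=
  penalty_exact_for_large_cost_general hd γ hγ F hFmono π hπ c hc u hu U hU
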